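/- Let (L, S, U, X, Y) be finite random variables with joint PMF W_{L,S}·q_{U,X|L,S} putting L independent of S, and channel output Y. Then I(U; Y|L) − I(U; S|L) = I(U; Y|L) − I(L,U; S), and hence max over q_{U,X|L,S} of [I(U;(L,Y)) − I(U;(L,S))] ≤ max over q_{U,X|S} of [I(U;Y) − I(U;S)] where on the right the auxiliary variable absorbs L. -/

import Mathlib

open scoped BigOperators Classical
open Finset

noncomputable section

/-- A probability mass function on a finite alphabet. -/
def IsPMF {α : Type*} [Fintype α] (p : α → ℝ) : Prop :=
  (∀ a, 0 ≤ p a) ∧ ∑ a, p a = 1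

/-- Shannon entropy (base 2) of a PMF on a finite alphabet. -/
def ent {α : Type*} [Fintype α] (p : α → ℝ) : ℝ :=
  -∑ a, p a * Real.logb 2 (p a)

/-- Pushforward of a PMF along a map (distribution of a random variable). -/
def pf {Ω T : Type*} [Fintype Ω] (p : Ω → ℝ) (f : Ω → T) : T → ℝ :=
  fun t => ∑ ω, if f ω = t then p ω else 0

/-- Mutual information of a joint PMF on a product alphabet. -/
def mi2 {α β : Type*} [Fintype α] [Fintype β] (p : α × β → ℝ) : ℝ :=
  ent (fun a => ∑ b, p (a, b)) + ent (fun b => ∑ a, p (a, b)) - ent p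

/-- Conditional entropy H(β | α) for a joint PMF on α × β. -/
def condEnt {α β : Type*} [Fintype α] [Fintype β] (p : α × β → ℝ) : ℝ :=
  ent p - ent (fun a => ∑ b, p (a, b))

/-- Conditional mutual information I(β; γ | α) for a joint PMF on α × β × γ. -/
def cmi {α β γ : Type*} [Fintype α] [Fintype β] [Fintype γ] (p : α × β × γ → ℝ) : ℝ :=
  ent (fun ab : α × β => ∑ c, p (ab.1, ab.2, c))
    + ent (fun ac : α × γ => ∑ b, p (ac.1, b, ac.2))
    - ent p - ent (fun a => ∑ b, ∑ c, p (a, b, c))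

/-- Total variation distance between two PMFs on a finite alphabet. -/
def tv {α : Type*} [Fintype α] (p q : α → ℝ) : ℝ :=
  (∑ a, |p a - q a|) / 2

/-!
Both claims follow from the two chain rules `I(A,B;C) = I(A;C) + I(B;C|A)` and
`I(B;A,C) = I(A;B) + I(B;C|A)`. Independence of `L` and `S` gives `I(L;S) = 0`, hence
`I(U;S|L) = I(L,U;S)`. Taking `U' = (L,U)` with `q'((l,u),x | s) = W_L(l) q(u,x | l,s)` leaves
the joint law of `(L,S,U,X,Y)` unchanged, and the chain rules show that
`[I(U';Y) - I(U';S)] - [I(U;L,Y) - I(U;L,S)] = I(L;Y) - I(L;S) = I(L;Y)`, which is nonnegative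
by Gibbs' inequality.
-/

section Pushforward

variable {Ω T T' : Type*} [Fintype Ω] [Fintype T]

lemma pf_apply_of_equiv {R : Type*} [Fintype R] (p : Ω → ℝ) (f : Ω → T) (e : T × R ≃ Ω)
    (he : ∀ v, f (e v) = v.1) (t : T) : pf p f t = ∑ r, p (e (t, r)) := by
  unfold pf
  rw [← e.sum_comp, Fintype.sum_prod_type]
  simp only [he, Finset.sum_ite_irrel, Finset.sum_const_zero, Finset.sum_ite_eq',
    Finset.mem_univ, if_true]

lemma pf_pf (p : Ω → ℝ) (f : Ω → T) (g : T → T') : pf (pf p f) g = pf p (g ∘ f) := by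
  funext t'
  simp only [pf, Finset.ite_sum_zero]
  rw [Finset.sum_comm]
  refine Finset.sum_congr rfl fun ω _ => ?_
  rw [Finset.sum_eq_single (f ω) (fun t _ ht => by simp [Ne.symm ht]) (by simp)]
  simp

lemma sum_pf (p : Ω → ℝ) (f : Ω → T) : ∑ t, pf p f t = ∑ ω, p ω := by
  unfold pf
  rw [Finset.sum_comm]
  simp only [Finset.sum_ite_eq, Finset.mem_univ, if_true]

lemma IsPMF.pf {p : Ω → ℝ} (hp : IsPMF p) (f : Ω → T) : IsPMF (pf p f) :=
  ⟨fun _ => Finset.sum_nonneg fun ω _ => by split_ifs <;> simp [hp.1 ω], by rw [sum_pf, hp.2]⟩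

lemma ent_pf_of_equiv (p : Ω → ℝ) (f : Ω → T) [Fintype T'] (e : T ≃ T') (g : Ω → T')
    (hg : ∀ ω, g ω = e (f ω)) : ent (pf p g) = ent (pf p f) := by
  unfold ent
  rw [← e.sum_comp]
  congr 2
  funext t
  simp only [pf, hg, e.apply_eq_iff_eq]

end Pushforward

section Marginals

variable {α β γ : Type*} [Fintype α] [Fintype β] [Fintype γ]

lemma pf_fst (B : α × β → ℝ) : pf B Prod.fst = fun a => ∑ b, B (a, b) :=
  funext <| pf_apply_of_equiv B _ (Equiv.refl _) fun _ => rfl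

lemma pf_snd (B : α × β → ℝ) : pf B Prod.snd = fun b => ∑ a, B (a, b) :=
  funext <| pf_apply_of_equiv B _ (Equiv.prodComm _ _) fun _ => rfl

lemma pf_fst_of_triple (B : α × β × γ → ℝ) :
    pf B Prod.fst = fun a => ∑ b, ∑ c, B (a, b, c) := by
  rw [pf_fst]
  simp only [Fintype.sum_prod_type]

lemma pf_fst_fst_of_triple (B : α × β × γ → ℝ) :
    pf B (fun t => (t.1, t.2.1)) = fun ab => ∑ c, B (ab.1, ab.2, c) :=
  funext <| pf_apply_of_equiv B _ (Equiv.prodAssoc _ _ _) fun _ => rfl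

lemma pf_fst_snd_of_triple (B : α × β × γ → ℝ) :
    pf B (fun t => (t.1, t.2.2)) = fun ac => ∑ b, B (ac.1, b, ac.2) :=
  funext <| pf_apply_of_equiv B _
    ⟨fun v => (v.1.1, v.2, v.1.2), fun t => ((t.1, t.2.2), t.2.1), fun _ => rfl, fun _ => rfl⟩
    fun _ => rfl

end Marginals

section Entropy

variable {α β : Type*} [Fintype α] [Fintype β]

lemma ent_eq_sum_negMulLog (p : α → ℝ) : ent p = (∑ a, Real.negMulLog (p a)) / Real.log 2 := by
  simp only [ent, Real.negMulLog, Real.logb, Finset.sum_div, ← Finset.sum_neg_distrib]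
  congr 1
  funext a
  ring

lemma ent_mul {pa : α → ℝ} {pb : β → ℝ} (ha : ∑ a, pa a = 1) (hb : ∑ b, pb b = 1) :
    ent (fun ab : α × β => pa ab.1 * pb ab.2) = ent pa + ent pb := by
  simp only [ent_eq_sum_negMulLog, Real.negMulLog_mul, Fintype.sum_prod_type,
    Finset.sum_add_distrib, ← Finset.mul_sum, ← Finset.sum_mul, ha, hb, one_mul, add_div]

lemma mi2_mul_eq_zero {pa : α → ℝ} {pb : β → ℝ} (ha : ∑ a, pa a = 1) (hb : ∑ b, pb b = 1) :
    mi2 (fun ab : α × β => pa ab.1 * pb ab.2) = 0 := by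
  simp only [mi2, ← Finset.mul_sum, ← Finset.sum_mul, ha, hb, mul_one, one_mul, ent_mul ha hb]
  exact sub_self _

lemma mul_log_sub_mul_log_le {x y : ℝ} (hx : 0 ≤ x) (hy : 0 ≤ y) (hxy : y = 0 → x = 0) :
    x * Real.log y - x * Real.log x ≤ y - x := by
  rcases hx.eq_or_lt with rfl | hx
  · simpa using hy
  have hy : 0 < y := hy.lt_of_ne fun h => hx.ne' (hxy h.symm)
  calc x * Real.log y - x * Real.log x = x * Real.log (y / x) := by
        rw [Real.log_div hy.ne' hx.ne']; ring
    _ ≤ x * (y / x - 1) :=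
        mul_le_mul_of_nonneg_left (Real.log_le_sub_one_of_pos (div_pos hy hx)) hx.le
    _ = y - x := by field_simp

/-- Gibbs' inequality. -/
theorem sum_mul_log_le_sum_mul_log {ι : Type*} [Fintype ι] {p q : ι → ℝ} (hp : ∀ i, 0 ≤ p i)
    (hq : ∀ i, 0 ≤ q i) (hpq : ∀ i, q i = 0 → p i = 0) (hsum : ∑ i, q i ≤ ∑ i, p i) :
    ∑ i, p i * Real.log (q i) ≤ ∑ i, p i * Real.log (p i) := by
  have h := Finset.sum_le_sum fun i (_ : i ∈ Finset.univ) =>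
    mul_log_sub_mul_log_le (hp i) (hq i) (hpq i)
  rw [Finset.sum_sub_distrib, Finset.sum_sub_distrib] at h
  linarith

lemma mi2_nonneg {p : α × β → ℝ} (hp : IsPMF p) : 0 ≤ mi2 p := by
  set pa : α → ℝ := fun a => ∑ b, p (a, b) with hpa
  set pb : β → ℝ := fun b => ∑ a, p (a, b) with hpb
  have hle_pa : ∀ ab, p ab ≤ pa ab.1 := fun ab =>
    Finset.single_le_sum (f := fun b => p (ab.1, b)) (fun b _ => hp.1 _) (Finset.mem_univ ab.2)
  have hle_pb : ∀ ab, p ab ≤ pb ab.2 := fun ab =>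
    Finset.single_le_sum (f := fun a => p (a, ab.2)) (fun a _ => hp.1 _) (Finset.mem_univ ab.1)
  have hsum_pa : ∑ a, pa a = 1 := by rw [← hp.2, Fintype.sum_prod_type]
  have hsum_pb : ∑ b, pb b = 1 := by rw [← hp.2, Fintype.sum_prod_type_right]
  have hgibbs := sum_mul_log_le_sum_mul_log (q := fun ab => pa ab.1 * pb ab.2) hp.1
    (fun ab => mul_nonneg ((hp.1 ab).trans (hle_pa ab)) ((hp.1 ab).trans (hle_pb ab)))
    (fun ab h => by
      rcases mul_eq_zero.1 h with h | h
      · exact le_antisymm (h ▸ hle_pa ab) (hp.1 ab)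
      · exact le_antisymm (h ▸ hle_pb ab) (hp.1 ab))
    (by
      rw [hp.2, Fintype.sum_prod_type]
      simp only [← Finset.mul_sum, ← Finset.sum_mul, hsum_pa, hsum_pb, one_mul, le_refl])
  have hsplit : ∑ ab, p ab * Real.log (pa ab.1 * pb ab.2)
      = ∑ a, pa a * Real.log (pa a) + ∑ b, pb b * Real.log (pb b) := by
    have hterm : ∀ ab, p ab * Real.log (pa ab.1 * pb ab.2)
        = p ab * Real.log (pa ab.1) + p ab * Real.log (pb ab.2) := by
      intro ab
      rcases (hp.1 ab).eq_or_lt with h | h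
      · simp [← h]
      rw [Real.log_mul (h.trans_le (hle_pa ab)).ne' (h.trans_le (hle_pb ab)).ne', mul_add]
    rw [Finset.sum_congr rfl fun ab _ => hterm ab, Finset.sum_add_distrib, Fintype.sum_prod_type,
      Fintype.sum_prod_type_right (f := fun ab => p ab * Real.log (pb ab.2))]
    simp only [← Finset.sum_mul, hpa, hpb]
  have hlog2 : 0 < Real.log 2 := Real.log_pos one_lt_two
  rw [mi2, ← hpa, ← hpb]
  simp only [ent_eq_sum_negMulLog, Real.negMulLog, neg_mul, Finset.sum_neg_distrib, ← add_div,
    ← sub_div]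
  exact div_nonneg (by linarith) hlog2.le

end Entropy

section RandomVariables

variable {Ω α β γ : Type*} [Fintype Ω] [Fintype α] [Fintype β] [Fintype γ]
  (p : Ω → ℝ) (A : Ω → α) (B : Ω → β) (C : Ω → γ)

lemma mi2_pf :
    mi2 (pf p fun ω => (A ω, B ω))
      = ent (pf p A) + ent (pf p B) - ent (pf p fun ω => (A ω, B ω)) := by
  rw [mi2, ← pf_fst, ← pf_snd, pf_pf, pf_pf]
  rfl

lemma cmi_pf :
    cmi (pf p fun ω => (A ω, B ω, C ω))
      = ent (pf p fun ω => (A ω, B ω)) + ent (pf p fun ω => (A ω, C ω))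
        - ent (pf p fun ω => (A ω, B ω, C ω)) - ent (pf p A) := by
  rw [cmi, ← pf_fst_fst_of_triple, ← pf_fst_snd_of_triple, ← pf_fst_of_triple,
    pf_pf, pf_pf, pf_pf]
  rfl

/-- Chain rule `I(A,B;C) = I(A;C) + I(B;C|A)`. -/
lemma mi2_pf_pair_left :
    mi2 (pf p fun ω => ((A ω, B ω), C ω))
      = mi2 (pf p fun ω => (A ω, C ω)) + cmi (pf p fun ω => (A ω, B ω, C ω)) := by
  rw [mi2_pf p (fun ω => (A ω, B ω)), mi2_pf, cmi_pf,
    ent_pf_of_equiv p (fun ω => (A ω, B ω, C ω)) (Equiv.prodAssoc α β γ).symm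
      (fun ω => ((A ω, B ω), C ω)) fun _ => rfl]
  ring

/-- Chain rule `I(B;A,C) = I(A;B) + I(B;C|A)`. -/
lemma mi2_pf_pair_right :
    mi2 (pf p fun ω => (B ω, (A ω, C ω)))
      = mi2 (pf p fun ω => (A ω, B ω)) + cmi (pf p fun ω => (A ω, B ω, C ω)) := by
  let e : α × β × γ ≃ β × α × γ :=
    ⟨fun t => (t.2.1, t.1, t.2.2), fun t => (t.2.1, t.1, t.2.2), fun _ => rfl, fun _ => rfl⟩
  rw [mi2_pf p B (fun ω => (A ω, C ω)), mi2_pf, cmi_pf,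
    ent_pf_of_equiv p (fun ω => (A ω, B ω, C ω)) e (fun ω => (B ω, A ω, C ω))
      fun _ => rfl]
  ring

end RandomVariables

/-- The kernel `q'_{U',X|S}` of the auxiliary `U' = (L,U)`, which absorbs `L`. -/
def auxAbsorb {L S U X : Type*} (WL : L → ℝ) (q : L × S → U × X → ℝ) :
    S → (L × U) × X → ℝ :=
  fun s w => WL w.1.1 * q (w.1.1, s) (w.1.2, w.2)

lemma isPMF_auxAbsorb {L S U X : Type*} [Fintype L] [Fintype U] [Fintype X] {WL : L → ℝ}
    {q : L × S → U × X → ℝ} (hWL : IsPMF WL) (hq : ∀ ls, IsPMF (q ls)) (s : S) :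
    IsPMF (auxAbsorb WL q s) := by
  refine ⟨fun w => mul_nonneg (hWL.1 _) ((hq _).1 _), ?_⟩
  have hq_sum : ∀ ls, ∑ u, ∑ x, q ls (u, x) = 1 := fun ls => by
    rw [← Fintype.sum_prod_type]; exact (hq ls).2
  simp only [auxAbsorb, Fintype.sum_prod_type, ← Finset.mul_sum, hq_sum, mul_one, hWL.2]

section Model

variable {L S U X Y : Type*} [Fintype L] [Fintype S] [Fintype U] [Fintype X] [Fintype Y]
  {WL : L → ℝ} {WS : S → ℝ} {q : L × S → U × X → ℝ} {Wch : S × X → Y → ℝ}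
  {p : L × S × U × X × Y → ℝ}

lemma pf_LS_eq_mul (hq : ∀ ls, IsPMF (q ls)) (hW : ∀ sx, IsPMF (Wch sx))
    (hfac : ∀ l s u x y, p (l, s, u, x, y) = WL l * WS s * q (l, s) (u, x) * Wch (s, x) y) :
    pf p (fun ω => (ω.1, ω.2.1)) = fun ls => WL ls.1 * WS ls.2 := by
  let e : (L × S) × ((U × X) × Y) ≃ L × S × U × X × Y :=
    ⟨fun v => (v.1.1, v.1.2, v.2.1.1, v.2.1.2, v.2.2),
      fun ω => ((ω.1, ω.2.1), (ω.2.2.1, ω.2.2.2.1), ω.2.2.2.2), fun _ => rfl, fun _ => rfl⟩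
  funext ls
  rw [pf_apply_of_equiv p _ e fun _ => rfl, Fintype.sum_prod_type]
  simp only [e, Equiv.coe_fn_mk, hfac, ← Finset.mul_sum, (hW _).2, mul_one, (hq _).2]

lemma pf_LUY_eq_auxAbsorb
    (hfac : ∀ l s u x y, p (l, s, u, x, y) = WL l * WS s * q (l, s) (u, x) * Wch (s, x) y) :
    pf p (fun ω => (((ω.1, ω.2.2.1) : L × U), ω.2.2.2.2))
      = fun w => ∑ s, ∑ x, WS s * auxAbsorb WL q s (w.1, x) * Wch (s, x) w.2 := by
  let e : ((L × U) × Y) × (S × X) ≃ L × S × U × X × Y :=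
    ⟨fun v => (v.1.1.1, v.2.1, v.1.1.2, v.2.2, v.1.2),
      fun ω => (((ω.1, ω.2.2.1), ω.2.2.2.2), ω.2.1, ω.2.2.2.1), fun _ => rfl, fun _ => rfl⟩
  funext w
  rw [pf_apply_of_equiv p _ e fun _ => rfl, Fintype.sum_prod_type]
  simp only [e, Equiv.coe_fn_mk, hfac, auxAbsorb]
  exact Finset.sum_congr rfl fun _ _ => Finset.sum_congr rfl fun _ _ => by ring

lemma pf_LUS_eq_auxAbsorb
    (hfac : ∀ l s u x y, p (l, s, u, x, y) = WL l * WS s * q (l, s) (u, x) * Wch (s, x) y) :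
    pf p (fun ω => (((ω.1, ω.2.2.1) : L × U), ω.2.1))
      = fun w => ∑ x, ∑ y, WS w.2 * auxAbsorb WL q w.2 (w.1, x) * Wch (w.2, x) y := by
  let e : ((L × U) × S) × (X × Y) ≃ L × S × U × X × Y :=
    ⟨fun v => (v.1.1.1, v.1.2, v.1.1.2, v.2.1, v.2.2),
      fun ω => (((ω.1, ω.2.2.1), ω.2.1), ω.2.2.2.1, ω.2.2.2.2), fun _ => rfl, fun _ => rfl⟩
  funext w
  rw [pf_apply_of_equiv p _ e fun _ => rfl, Fintype.sum_prod_type]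
  simp only [e, Equiv.coe_fn_mk, hfac, auxAbsorb]
  exact Finset.sum_congr rfl fun _ _ => Finset.sum_congr rfl fun _ _ => by ring

lemma isPMF_of_factorization (hWL : IsPMF WL) (hWS : IsPMF WS) (hq : ∀ ls, IsPMF (q ls))
    (hW : ∀ sx, IsPMF (Wch sx))
    (hfac : ∀ l s u x y, p (l, s, u, x, y) = WL l * WS s * q (l, s) (u, x) * Wch (s, x) y) :
    IsPMF p := by
  refine ⟨fun ⟨l, s, u, x, y⟩ => ?_, ?_⟩
  · rw [hfac]
    exact mul_nonneg (mul_nonneg (mul_nonneg (hWL.1 l) (hWS.1 s)) ((hq _).1 _)) ((hW _).1 _)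
  · rw [← sum_pf p (fun ω => (ω.1, ω.2.1)), pf_LS_eq_mul hq hW hfac, Fintype.sum_prod_type]
    simp only [← Finset.mul_sum, hWS.2, mul_one, hWL.2]

end Model

/-- with joint PMF `W_L·W_S·q_{U,X|L,S}·W_{Y|S,X}` (`L ⫫ S`):
`I(U;Y|L) − I(U;S|L) = I(U;Y|L) − I(L,U;S)`, and hence the GP-type quantity
`I(U;(L,Y)) − I(U;(L,S))` is dominated by `I(U';Y) − I(U';S)` for a choice of
conditional PMF `q'_{U',X|S}` whose auxiliary `U' = (L,U)` absorbs `L`. -/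
theorem stmt_15 {L S U X Y : Type*}
    [Fintype L] [Fintype S] [Fintype U] [Fintype X] [Fintype Y]
    (WL : L → ℝ) (WS : S → ℝ) (q : L × S → U × X → ℝ) (Wch : S × X → Y → ℝ)
    (hWL : IsPMF WL) (hWS : IsPMF WS) (hq : ∀ ls, IsPMF (q ls)) (hW : ∀ sx, IsPMF (Wch sx))
    (p : L × S × U × X × Y → ℝ)
    (hfac : ∀ l s u x y,
      p (l, s, u, x, y) = WL l * WS s * q (l, s) (u, x) * Wch (s, x) y) :
    (cmi (pf p (fun ω => (ω.1, ω.2.2.1, ω.2.2.2.2)))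
        - cmi (pf p (fun ω => (ω.1, ω.2.2.1, ω.2.1)))
      = cmi (pf p (fun ω => (ω.1, ω.2.2.1, ω.2.2.2.2)))
        - mi2 (pf p (fun ω => (((ω.1, ω.2.2.1) : L × U), ω.2.1))))
    ∧ ∃ q' : S → (L × U) × X → ℝ, (∀ s, IsPMF (q' s)) ∧
        mi2 (pf p (fun ω => (ω.2.2.1, ((ω.1, ω.2.2.2.2) : L × Y))))
          - mi2 (pf p (fun ω => (ω.2.2.1, ((ω.1, ω.2.1) : L × S))))
        ≤ mi2 (fun w : (L × U) × Y => ∑ s, ∑ x, WS s * q' s (w.1, x) * Wch (s, x) w.2)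
          - mi2 (fun w : (L × U) × S => ∑ x, ∑ y, WS w.2 * q' w.2 (w.1, x) * Wch (w.2, x) y) := by
  have hLS : mi2 (pf p fun ω => (ω.1, ω.2.1)) = 0 := by
    rw [pf_LS_eq_mul hq hW hfac]
    exact mi2_mul_eq_zero hWL.2 hWS.2
  have hLY : 0 ≤ mi2 (pf p fun ω => (ω.1, ω.2.2.2.2)) :=
    mi2_nonneg ((isPMF_of_factorization hWL hWS hq hW hfac).pf _)
  have hS_left := mi2_pf_pair_left p (·.1) (·.2.2.1) (·.2.1)
  have hY_left := mi2_pf_pair_left p (·.1) (·.2.2.1) (·.2.2.2.2)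
  have hS_right := mi2_pf_pair_right p (·.1) (·.2.2.1) (·.2.1)
  have hY_right := mi2_pf_pair_right p (·.1) (·.2.2.1) (·.2.2.2.2)
  refine ⟨by linarith, auxAbsorb WL q, isPMF_auxAbsorb hWL hq, ?_⟩
  rw [← pf_LUY_eq_auxAbsorb hfac, ← pf_LUS_eq_auxAbsorb hfac]
  linarith
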